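/- arXiv:1910.04637 — 4 statements merged into one kernel-verified Lean document; each statement's English description precedes it below -/
import Mathlib

section
/- Let m and n be positive coprime integers. For every word w of length m+n in the alphabet {U,R} containing exactly m letters U and n letters R, exactly one of the m+n cyclic rotations of w is a rational Dyck word. -/
/-- A word in the alphabet `{U, R}` (encoded as `Bool`, with `true` = `U` and
`false` = `R`) is a *rational Dyck word* for slope `m/n` if every prefix with
`b` letters `U` and `a` letters `R` satisfies `b * n ≥ a * m`. -/
def IsRationalDyckWord (m n : ℕ) (w : List Bool) : Prop :=
  ∀ k : ℕ, ((w.take k).count true) * n ≥ ((w.take k).count false) * m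

/-!
Call `n · #U - m · #R` the height of a word. The whole word has height `0`, so the rotation of
`w` starting after its prefix `t` is a rational Dyck word exactly when `t` is a prefix of `w` of
minimal height. Such a prefix exists; it is unique among the prefixes of length `< m + n` because,
`m` and `n` being coprime, a nonempty factor of height `0` has length at least `m + n`.
-/

theorem List.forall_prefix_append_iff {α : Type*} {u v : List α} {P : List α → Prop} :
    (∀ p, p <+: u ++ v → P p) ↔ (∀ p, p <+: u → P p) ∧ ∀ q, q <+: v → P (u ++ q) := by
  refine ⟨fun h => ⟨fun p hp => h p (hp.trans (prefix_append u v)),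
    fun q hq => h _ ((prefix_append_right_inj u).2 hq)⟩, fun ⟨hu, hv⟩ p hp => ?_⟩
  rcases prefix_or_prefix_of_prefix hp (prefix_append u v) with hpu | hup
  · exact hu p hpu
  · rw [prefix_append_drop hup] at hp ⊢
    exact hv _ ((prefix_append_right_inj u).1 hp)

namespace RationalDyck

variable {m n : ℕ}

def height (m n : ℕ) (w : List Bool) : ℤ :=
  w.count true * n - w.count false * m

@[simp]
theorem height_nil : height m n [] = 0 := by
  simp [height]

theorem height_append (u v : List Bool) : height m n (u ++ v) = height m n u + height m n v := by
  simp only [height, List.count_append]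
  push_cast
  ring

theorem height_eq_zero {w : List Bool} (hU : w.count true = m) (hR : w.count false = n) :
    height m n w = 0 := by
  simp only [height, hU, hR]
  ring

theorem isRationalDyckWord_iff_forall_prefix {w : List Bool} :
    IsRationalDyckWord m n w ↔ ∀ p, p <+: w → 0 ≤ height m n p := by
  refine ⟨fun h p hp => ?_, fun h k => ?_⟩
  · rw [List.prefix_iff_eq_take.1 hp, height, sub_nonneg]
    exact_mod_cast h _
  · have := h _ (List.take_prefix k w)
    rw [height, sub_nonneg] at this
    exact_mod_cast this

theorem isRationalDyckWord_append_swap_iff {t d : List Bool} (h : height m n (t ++ d) = 0) :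
    IsRationalDyckWord m n (d ++ t) ↔ ∀ p, p <+: t ++ d → height m n t ≤ height m n p := by
  rw [height_append] at h
  simp only [isRationalDyckWord_iff_forall_prefix, List.forall_prefix_append_iff, height_append,
    and_comm (a := ∀ p, p <+: d → _)]
  refine and_congr (forall₂_congr fun q _ => ?_) (forall₂_congr fun p _ => ?_) <;> constructor <;>
    intro <;> linarith

theorem isRationalDyckWord_rotate_iff {w : List Bool} {r : ℕ} (hw : height m n w = 0)
    (hr : r ≤ w.length) :
    IsRationalDyckWord m n (w.rotate r) ↔ ∀ p, p <+: w → height m n (w.take r) ≤ height m n p := by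
  rw [← List.take_append_drop r w] at hw
  rw [List.rotate_eq_drop_append_take hr, isRationalDyckWord_append_swap_iff hw,
    List.take_append_drop]

theorem add_le_length_of_height_eq_zero (hmn : m.Coprime n) {u : List Bool} (hu : u ≠ [])
    (h : height m n u = 0) : m + n ≤ u.length := by
  set a := u.count true
  set b := u.count false
  have hab : a * n = b * m := by
    rw [height, sub_eq_zero] at h
    exact_mod_cast h
  have hlen : a + b = u.length := List.count_true_add_count_false u
  have hpos : 0 < u.length := List.length_pos_iff.2 hu
  have hma : m ∣ a := hmn.dvd_of_dvd_mul_right ⟨b, by rw [hab, mul_comm]⟩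
  have hnb : n ∣ b := hmn.symm.dvd_of_dvd_mul_right ⟨a, by rw [← hab, mul_comm]⟩
  rcases Nat.eq_zero_or_pos a with ha | ha
  · have hm : m = 0 := by
      simpa [ha, show b ≠ 0 by omega] using hab.symm
    have hn : n = 1 := Nat.coprime_zero_left n |>.1 (hm ▸ hmn)
    omega
  · have hma_le := Nat.le_of_dvd ha hma
    rcases Nat.eq_zero_or_pos b with hb | hb
    · have hn : n = 0 := by simpa [hb, ha.ne'] using hab
      omega
    · have hnb_le := Nat.le_of_dvd hb hnb
      omega

theorem injOn_height_take (hmn : m.Coprime n) {w : List Bool} (hw : w.length ≤ m + n) :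
    Set.InjOn (fun j => height m n (w.take j)) (Set.Iio w.length) := by
  intro j hj k hk hjk
  wlog hle : j ≤ k generalizing j k
  · exact (this hk hj hjk.symm (le_of_not_ge hle)).symm
  set seg := (w.take k).drop j
  have hsplit : w.take j ++ seg = w.take k := by
    rw [← List.take_append_drop j (w.take k), List.take_take, min_eq_left hle]
  have hseg : height m n seg = 0 := by
    simp only [← hsplit, height_append, left_eq_add] at hjk
    exact hjk
  rw [Set.mem_Iio] at hk
  have hseg_len : seg.length = k - j := by
    simp only [seg, List.length_drop, List.length_take]
    omega
  by_contra hne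
  have := add_le_length_of_height_eq_zero hmn (List.ne_nil_of_length_pos (by omega)) hseg
  omega

theorem exists_forall_prefix_height_take_le {w : List Bool} (hw : height m n w = 0)
    (hne : w ≠ []) :
    ∃ r < w.length, ∀ p, p <+: w → height m n (w.take r) ≤ height m n p := by
  have hpos : 0 ∈ Finset.range w.length := Finset.mem_range.2 (List.length_pos_iff.2 hne)
  obtain ⟨r, hr, hmin⟩ :=
    (Finset.range w.length).exists_min_image (fun j => height m n (w.take j)) ⟨0, hpos⟩
  refine ⟨r, Finset.mem_range.1 hr, fun p hp => ?_⟩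
  rw [List.prefix_iff_eq_take.1 hp]
  rcases lt_or_ge p.length w.length with hlt | hge
  · exact hmin _ (Finset.mem_range.2 hlt)
  · -- the full word has the same height as the empty prefix
    simpa [List.take_of_length_le hge, hw] using hmin 0 hpos

end RationalDyck

theorem exists_unique_rotation_isRationalDyckWord_general
    (m n : ℕ) (hmn : Nat.Coprime m n)
    (w : List Bool) (hlen : w.length = m + n)
    (hU : w.count true = m) (hR : w.count false = n) :
    ∃! r : Fin (m + n), IsRationalDyckWord m n (w.rotate (r : ℕ)) := by
  have hw := RationalDyck.height_eq_zero hU hR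
  have hne : w ≠ [] := by
    rintro rfl
    obtain ⟨rfl, rfl⟩ : m = 0 ∧ n = 0 := by simp only [List.length_nil] at hlen; omega
    exact absurd hmn (by decide)
  obtain ⟨r, hrL, hr⟩ := RationalDyck.exists_forall_prefix_height_take_le hw hne
  refine ⟨⟨r, hlen ▸ hrL⟩, (RationalDyck.isRationalDyckWord_rotate_iff hw hrL.le).2 hr,
    fun s hs => ?_⟩
  have hsL : (s : ℕ) < w.length := hlen.symm ▸ s.isLt
  replace hs := (RationalDyck.isRationalDyckWord_rotate_iff hw hsL.le).1 hs
  exact Fin.ext <| RationalDyck.injOn_height_take hmn hlen.le hsL hrL <|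
    le_antisymm (hs _ (w.take_prefix r)) (hr _ (w.take_prefix s))

/-- **Cycle lemma (Grossman).**  For positive coprime `m`, `n` and any word `w`
with exactly `m` letters `U` and `n` letters `R`, exactly one of the `m + n`
cyclic rotations of `w` is a rational Dyck word. -/
theorem exists_unique_rotation_isRationalDyckWord
    (m n : ℕ) (hm : 0 < m) (hn : 0 < n) (hmn : Nat.Coprime m n)
    (w : List Bool) (hlen : w.length = m + n)
    (hU : w.count true = m) (hR : w.count false = n) :
    ∃! r : Fin (m + n), IsRationalDyckWord m n (w.rotate (r : ℕ)) :=
  exists_unique_rotation_isRationalDyckWord_general m n hmn w hlen hU hR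
end

section
/- Let r ≥ 3 be a real number, and let a₁, a₂, m, n be positive real numbers such that a₂ > a₁, a₁² + a₂² > r·a₁·a₂, and m² + n² ≤ r·m·n. Then a₂·m > a₁·n. -/
/-- Base case of the induction in the proof of Theorem 4.4: if the pair
`(a₁, a₂)` violates the ratio condition (i.e. `a₂ > a₁` and
`a₁² + a₂² > r a₁ a₂`) while `m² + n² ≤ r m n` (the weight `n α₀ + m α₁` is in
the imaginary cone), then `a₂ / a₁ > n / m`, i.e. `a₂ m > a₁ n`. -/
theorem base_case_violates_stability (r a₁ a₂ m n : ℝ) (hr : 3 ≤ r)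
    (ha₁ : 0 < a₁) (ha₂ : 0 < a₂) (hm : 0 < m) (hn : 0 < n)
    (hgt : a₂ > a₁) (hout : a₁ ^ 2 + a₂ ^ 2 > r * a₁ * a₂)
    (hin : m ^ 2 + n ^ 2 ≤ r * m * n) :
    a₂ * m > a₁ * n := by
  by_contra h
  push_neg at h
  have hP : (a₂ * m - a₁ * n) * (a₂ * n - a₁ * m) > 0 := by
    nlinarith [mul_lt_mul_of_pos_right hout (mul_pos hm hn),
      mul_le_mul_of_nonneg_left hin (mul_pos ha₁ ha₂).le]
  have h1 : a₂ * m - a₁ * n ≤ 0 := by linarith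
  have h2 : a₂ * n - a₁ * m < 0 := by
    rcases lt_or_ge (a₂ * n - a₁ * m) 0 with h' | h'
    · exact h'
    · nlinarith
  nlinarith [mul_pos hm hn, mul_pos (mul_pos ha₁ ha₂) (mul_pos hm hn), sq_nonneg (a₂ - a₁)]
end

section
/- Let r ≥ 3 be an integer, define the integer sequence (b_k) by b₀ = 0, b₁ = 1, b_{k+1} = r·b_k − b_{k−1} for k ≥ 1, and let (a_k)_{k≥1} be a sequence of nonnegative real numbers satisfying 2·a_{k+1} ≤ (r + √(r² − 4))·a_k for all k ≥ 1. Then for all k ≥ 1, a_{k+2}·b_k ≤ a_{k+1}·b_{k+1} and a_{k+2}·b_{k−1} ≤ a_{k+1}·b_k. -/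
/-- Remark after Theorem 4.4 of the paper: for an integer `r ≥ 3`, with
`b₀ = 0`, `b₁ = 1`, `b_{k+1} = r b_k − b_{k−1}` the coordinates of the rank-2
positive real roots, any sequence `(a_k)_{k ≥ 1}` of nonnegative reals
satisfying the ratio condition `2 a_{k+1} ≤ (r + √(r² − 4)) a_k` of equation
(4.2) automatically satisfies Littelmann's string-data conditions
`a_{k+2} b_k ≤ a_{k+1} b_{k+1}` and `a_{k+2} b_{k−1} ≤ a_{k+1} b_k`. -/
theorem ratio_cond_implies_littelmann (r : ℤ) (hr : 3 ≤ r) (b : ℕ → ℤ)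
    (h0 : b 0 = 0) (h1 : b 1 = 1)
    (hrec : ∀ k : ℕ, b (k + 2) = r * b (k + 1) - b k)
    (a : ℕ → ℝ) (ha : ∀ k : ℕ, 1 ≤ k → 0 ≤ a k)
    (hratio : ∀ k : ℕ, 1 ≤ k →
      2 * a (k + 1) ≤ ((r : ℝ) + Real.sqrt ((r : ℝ) ^ 2 - 4)) * a k) :
    ∀ k : ℕ, 1 ≤ k →
      a (k + 2) * (b k : ℝ) ≤ a (k + 1) * (b (k + 1) : ℝ) ∧
        a (k + 2) * (b (k - 1) : ℝ) ≤ a (k + 1) * (b k : ℝ) := by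
  have hrR : (3 : ℝ) ≤ (r : ℝ) := by exact_mod_cast hr
  set s : ℝ := Real.sqrt ((r : ℝ) ^ 2 - 4) with hs
  have hs0 : 0 ≤ s := Real.sqrt_nonneg _
  have hs2 : s ^ 2 = (r : ℝ) ^ 2 - 4 := Real.sq_sqrt (by nlinarith)
  set φ : ℝ := ((r : ℝ) + s) / 2 with hφ
  have hφpos : 0 < φ := by positivity
  have hsr : s ≤ (r : ℝ) := by nlinarith
  have hφr : φ ≤ (r : ℝ) := by rw [hφ]; linarith
  have hφsq : φ ^ 2 = (r : ℝ) * φ - 1 := by rw [hφ]; ring_nf; nlinarith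
  -- key: 0 ≤ b k and φ * b k ≤ b (k+1)
  have key : ∀ k : ℕ, 0 ≤ ((b k : ℝ)) ∧ φ * (b k : ℝ) ≤ (b (k + 1) : ℝ) := by
    intro k
    induction k with
    | zero => simp [h0, h1]
    | succ n ih =>
      obtain ⟨hb0, hb1⟩ := ih
      have hbn1 : 0 ≤ ((b (n + 1) : ℝ)) := le_trans (by positivity) hb1
      refine ⟨hbn1, ?_⟩
      have hrw : ((b (n + 2) : ℤ) : ℝ) = (r : ℝ) * (b (n + 1) : ℝ) - (b n : ℝ) := by
        rw [hrec n]; push_cast; ring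
      rw [hrw]
      have h2 : (r - φ) * (φ * (b n : ℝ)) ≤ (r - φ) * (b (n + 1) : ℝ) :=
        mul_le_mul_of_nonneg_left hb1 (by linarith)
      nlinarith
  intro k hk
  have hrat : 2 * a (k + 2) ≤ ((r : ℝ) + s) * a (k + 1) := hratio (k + 1) (by omega)
  have hak1 : 0 ≤ a (k + 1) := ha (k + 1) (by omega)
  have haφ : a (k + 2) ≤ φ * a (k + 1) := by rw [hφ]; linarith
  have hak2 : 0 ≤ a (k + 2) := ha (k + 2) (by omega)
  constructor
  · obtain ⟨hb0, hb1⟩ := key k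
    calc a (k + 2) * (b k : ℝ) ≤ φ * a (k + 1) * (b k : ℝ) :=
          mul_le_mul_of_nonneg_right haφ hb0
      _ = a (k + 1) * (φ * (b k : ℝ)) := by ring
      _ ≤ a (k + 1) * (b (k + 1) : ℝ) := mul_le_mul_of_nonneg_left hb1 hak1
  · obtain ⟨k, rfl⟩ := Nat.exists_eq_add_of_le hk
    simp only [Nat.add_sub_cancel_left, Nat.add_comm 1 k] at *
    obtain ⟨hb0, hb1⟩ := key k
    calc a (k + 1 + 2) * (b k : ℝ) ≤ φ * a (k + 1 + 1) * (b k : ℝ) :=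
          mul_le_mul_of_nonneg_right haφ hb0
      _ = a (k + 1 + 1) * (φ * (b k : ℝ)) := by ring
      _ ≤ a (k + 1 + 1) * (b (k + 1) : ℝ) := mul_le_mul_of_nonneg_left hb1 hak1
end

section
/- Fix a nonnegative integer d. For each positive integer k, let D_k denote the set of lattice paths from (0,0) to (k+1, k) consisting of unit up-steps and unit right-steps such that every lattice point (a, b) visited by the path satisfies b·(k+1) ≥ a·k, and for a path p let V_d(p) denote the number of lattice points (a, b) visited by p with b − a = d. Then the average (∑_{p ∈ D_k} V_d(p)) / |D_k| converges to 4d + 4 as k → ∞. -/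
open Classical in
/-- The set of rational Dyck paths from `(0,0)` to `(k+1, k)`, encoded as words
of `2k+1` steps (`true` = unit up-step, `false` = unit right-step) with exactly
`k` up-steps, such that every visited lattice point `(a, b)` (given by prefix
counts) satisfies `b * (k+1) ≥ a * k`. -/
noncomputable def DyckPathsToNextToDiag (k : ℕ) : Finset (Fin (2 * k + 1) → Bool) :=
  Finset.univ.filter (fun f =>
    (List.ofFn f).count true = k ∧
      ∀ j : ℕ, ((List.ofFn f).take j).count true * (k + 1) ≥
        ((List.ofFn f).take j).count false * k)

open Classical in
/-- The number of lattice points `(a, b)` visited by the path `f` lying on the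
line `b − a = d`; the visited points are exactly the prefix count pairs. -/
noncomputable def visitsToLine (k d : ℕ) (f : Fin (2 * k + 1) → Bool) : ℕ :=
  ((Finset.range (2 * k + 2)).filter (fun j =>
    ((((List.ofFn f).take j).count true : ℤ) -
      (((List.ofFn f).take j).count false : ℤ) = (d : ℤ)))).card

/-!
Rational Dyck paths to `(k + 1, k)` are exactly the Dyck words of semilength `k` followed by a
right-step, so there are `Catalan k` of them, and their visits to the line `b - a = d` are the
visits of Dyck words to height `d`. Cutting a Dyck word at such a visit, inserting an up-step and
replacing the remaining tail by its reverse complement is a bijection onto the ballot words of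
length `2k + 1` ending at height `2d + 1`; the inverse cuts at the last point of height `d`.
Hence the total number of visits is the ballot number
`C(2k+1, k+d+1) - C(2k+1, k+d+2) = C(2k+1, k+1+d) (2d+2) / (k+d+2)`, and dividing by
`Catalan k = C(2k+1, k+1) / (2k+1)` gives
`(2d+2) (2k+1) / (k+d+2) · C(2k+1, k+1+d) / C(2k+1, k+1) → (2d+2) · 2 · 1`.
-/

namespace BallotWord

open List Finset

def height (l : List Bool) : ℤ := l.count true - l.count false

@[simp] theorem height_nil : height [] = 0 := by simp [height]

@[simp] theorem height_singleton (b : Bool) : height [b] = if b then 1 else -1 := by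
  cases b <;> simp [height]

theorem height_append (a b : List Bool) : height (a ++ b) = height a + height b := by
  simp only [height, count_append]; push_cast; ring

theorem two_mul_count_true (l : List Bool) : 2 * (l.count true : ℤ) = l.length + height l := by
  have := count_true_add_count_false l
  simp only [height]; omega

def revComp (l : List Bool) : List Bool := (l.map not).reverse

@[simp] theorem revComp_revComp (l : List Bool) : revComp (revComp l) = l := by
  simp [revComp, map_reverse, Function.comp_def]

@[simp] theorem length_revComp (l : List Bool) : (revComp l).length = l.length := by
  simp [revComp]

@[simp] theorem height_revComp (l : List Bool) : height (revComp l) = -height l := by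
  have hf : (l.map not).count true = l.count false :=
    count_map_of_injective l not Bool.not_injective false
  have ht : (l.map not).count false = l.count true :=
    count_map_of_injective l not Bool.not_injective true
  simp only [revComp, height, count_reverse, hf, ht]
  ring

theorem height_take_revComp (l : List Bool) (i : ℕ) :
    height ((revComp l).take i) = height (l.take (l.length - i)) - height l := by
  have hsplit := height_append (l.take (l.length - i)) (l.drop (l.length - i))
  rw [take_append_drop] at hsplit
  rw [revComp, take_reverse, length_map, ← map_drop, ← revComp, height_revComp]
  omega

def StaysAbove (c : ℤ) (l : List Bool) : Prop := ∀ i, c ≤ height (l.take i)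

namespace StaysAbove

variable {c : ℤ} {l : List Bool}

theorem nonpos (h : StaysAbove c l) : c ≤ 0 := by simpa using h 0

theorem le_height (h : StaysAbove c l) : c ≤ height l := by simpa using h l.length

theorem mono {c' : ℤ} (h : StaysAbove c l) (hc : c' ≤ c) : StaysAbove c' l :=
  fun i => hc.trans (h i)

end StaysAbove

theorem staysAbove_iff_forall_le_length {c : ℤ} {l : List Bool} :
    StaysAbove c l ↔ ∀ i ≤ l.length, c ≤ height (l.take i) := by
  refine ⟨fun h i _ => h i, fun h i => ?_⟩
  rcases le_total i l.length with hi | hi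
  · exact h i hi
  · simpa [take_of_length_le hi] using h l.length le_rfl

theorem staysAbove_append {c : ℤ} {a b : List Bool} :
    StaysAbove c (a ++ b) ↔ StaysAbove c a ∧ StaysAbove (c - height a) b := by
  refine ⟨fun h => ⟨fun i => ?_, fun i => ?_⟩, fun ⟨ha, hb⟩ i => ?_⟩
  · rcases le_total i a.length with hi | hi
    · simpa [take_append_of_le_length hi] using h i
    · simpa [take_of_length_le hi, take_left'] using h a.length
  · have := h (a.length + i)
    rw [take_length_add_append, height_append] at this
    omega
  · rw [take_append, height_append]
    rcases le_total i a.length with hi | hi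
    · simpa [Nat.sub_eq_zero_of_le hi] using ha i
    · have := hb (i - a.length)
      rw [take_of_length_le hi]
      omega

theorem staysAbove_revComp {c : ℤ} {l : List Bool} :
    StaysAbove c (revComp l) ↔ StaysAbove (c + height l) l := by
  simp only [staysAbove_iff_forall_le_length, length_revComp, height_take_revComp]
  constructor
  · intro h i hi
    have := h (l.length - i) (Nat.sub_le _ _)
    rw [Nat.sub_sub_self hi] at this
    omega
  · intro h i _
    have := h (l.length - i) (Nat.sub_le _ _)
    omega

theorem staysAbove_singleton {c : ℤ} {b : Bool} :
    StaysAbove c [b] ↔ c ≤ 0 ∧ c ≤ height [b] := by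
  refine ⟨fun h => ⟨h.nonpos, h.le_height⟩, fun ⟨h0, h1⟩ => ?_⟩
  rw [staysAbove_iff_forall_le_length]
  intro i hi
  rcases Nat.le_one_iff_eq_zero_or_eq_one.1 (by simpa using hi) with rfl | rfl
  · simpa using h0
  · simpa using h1

theorem exists_ofFn_eq {α : Type*} {n : ℕ} {l : List α} (h : l.length = n) :
    ∃ f : Fin n → α, ofFn f = l := by
  subst h
  exact ⟨_, ofFn_getElem⟩

open Classical in
noncomputable def ballotWords (n t : ℕ) : Finset (List Bool) :=
  ((univ : Finset (Fin n → Bool)).image ofFn).filter (fun l => l.count true = t ∧ StaysAbove 0 l)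

theorem mem_ballotWords {n t : ℕ} {l : List Bool} :
    l ∈ ballotWords n t ↔ l.length = n ∧ l.count true = t ∧ StaysAbove 0 l := by
  simp only [ballotWords, Finset.mem_filter, Finset.mem_image, mem_univ, true_and]
  refine ⟨fun ⟨⟨f, hf⟩, h⟩ => ⟨hf ▸ length_ofFn, h⟩, fun ⟨hl, h⟩ => ⟨exists_ofFn_eq hl, h⟩⟩

theorem height_of_mem_ballotWords {n t : ℕ} {l : List Bool} (h : l ∈ ballotWords n t) :
    height l = 2 * t - n := by
  obtain ⟨hlen, hcount, -⟩ := mem_ballotWords.1 h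
  have := two_mul_count_true l
  rw [hlen, hcount] at this
  omega

theorem ballotWords_eq_empty_of_lt_two_mul {n t : ℕ} (h : 2 * t < n) : ballotWords n t = ∅ := by
  refine eq_empty_of_forall_notMem fun l hl => ?_
  have := (mem_ballotWords.1 hl).2.2.le_height
  rw [height_of_mem_ballotWords hl] at this
  omega

theorem ballotWords_eq_empty_of_lt {n t : ℕ} (h : n < t) : ballotWords n t = ∅ := by
  refine eq_empty_of_forall_notMem fun l hl => ?_
  obtain ⟨hlen, hcount, -⟩ := mem_ballotWords.1 hl
  have := count_le_length (a := true) (l := l)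
  omega

theorem ballotWords_zero_zero : ballotWords 0 0 = {[]} := by
  ext l
  simp only [mem_ballotWords, Finset.mem_singleton, length_eq_zero_iff]
  refine ⟨fun h => h.1, ?_⟩
  rintro rfl
  exact ⟨rfl, rfl, fun i => by simp⟩

theorem ballotWords_succ_succ {n t : ℕ} (h : n ≤ 2 * t + 1) :
    ballotWords (n + 1) (t + 1) =
      (ballotWords n t).image (· ++ [true]) ∪ (ballotWords n (t + 1)).image (· ++ [false]) := by
  ext l
  simp only [mem_union, mem_image]
  constructor
  · intro hl
    obtain ⟨hlen, hcount, hball⟩ := mem_ballotWords.1 hl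
    obtain ⟨u, x, rfl⟩ : ∃ u x, l = u ++ [x] := by
      rcases eq_nil_or_concat l with rfl | ⟨u, x, rfl⟩
      · simp at hlen
      · exact ⟨u, x, concat_eq_append⟩
    have hlen' : u.length = n := by simpa using hlen
    have hball' := (staysAbove_append.1 hball).1
    cases x
    · exact .inr ⟨u, mem_ballotWords.2 ⟨hlen', by simpa using hcount, hball'⟩, rfl⟩
    · exact .inl ⟨u, mem_ballotWords.2 ⟨hlen', by simpa using hcount, hball'⟩, rfl⟩
  · rintro (⟨u, hu, rfl⟩ | ⟨u, hu, rfl⟩) <;>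
    · obtain ⟨hlen, hcount, hball⟩ := mem_ballotWords.1 hu
      have hheight := height_of_mem_ballotWords hu
      have hnonneg := hball.le_height
      refine mem_ballotWords.2 ⟨by simp [hlen], by simp [hcount], ?_⟩
      refine staysAbove_append.2 ⟨hball, staysAbove_singleton.2 ⟨?_, ?_⟩⟩ <;> simp <;> omega

-- The subtraction truncates only when `2 * t < n`, where there are no ballot words.
def ballotNumber (n t : ℕ) : ℕ := n.choose t - n.choose (t + 1)

theorem choose_succ_le_choose {n t : ℕ} (h : n ≤ 2 * t + 1) : n.choose (t + 1) ≤ n.choose t := by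
  refine Nat.le_of_mul_le_mul_right ?_ t.succ_pos
  rw [Nat.choose_succ_right_eq]
  exact Nat.mul_le_mul_left _ (by omega)

theorem ballotNumber_mul_succ (n t : ℕ) :
    ballotNumber n t * (t + 1) = n.choose t * (2 * t + 1 - n) := by
  rw [ballotNumber, Nat.sub_mul, Nat.choose_succ_right_eq, ← Nat.mul_sub]
  rcases le_or_gt t n with h | h
  · congr 1; omega
  · simp [Nat.choose_eq_zero_of_lt h]

theorem ballotNumber_eq_zero {n t : ℕ} (h : 2 * t < n) : ballotNumber n t = 0 := by
  have := ballotNumber_mul_succ n t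
  rw [Nat.sub_eq_zero_of_le h, mul_zero, mul_eq_zero] at this
  omega

theorem ballotNumber_succ_succ {n t : ℕ} (h : n ≤ 2 * t + 1) :
    ballotNumber (n + 1) (t + 1) = ballotNumber n t + ballotNumber n (t + 1) := by
  have h₁ := choose_succ_le_choose h
  have h₂ := choose_succ_le_choose (show n ≤ 2 * (t + 1) + 1 by omega)
  have pascal₁ := Nat.choose_succ_succ' n t
  have pascal₂ := Nat.choose_succ_succ' n (t + 1)
  simp only [ballotNumber]
  omega

theorem card_ballotWords : ∀ n t, (ballotWords n t).card = ballotNumber n t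
  | 0, 0 => by simp [ballotWords_zero_zero, ballotNumber]
  | 0, t + 1 => by simp [ballotWords_eq_empty_of_lt t.succ_pos, ballotNumber]
  | n + 1, 0 => by
    rw [ballotWords_eq_empty_of_lt_two_mul (by omega), ballotNumber_eq_zero (by omega), card_empty]
  | n + 1, t + 1 => by
    by_cases h : n ≤ 2 * t + 1
    · have hdisj : Disjoint ((ballotWords n t).image (· ++ [true]))
          ((ballotWords n (t + 1)).image (· ++ [false])) := by
        simp [Finset.disjoint_left]
      rw [ballotWords_succ_succ h, card_union_of_disjoint hdisj,
        card_image_of_injective _ (append_left_injective _),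
        card_image_of_injective _ (append_left_injective _),
        card_ballotWords n t, card_ballotWords n (t + 1), ballotNumber_succ_succ h]
    · rw [ballotWords_eq_empty_of_lt_two_mul (by omega), ballotNumber_eq_zero (by omega),
        card_empty]

theorem height_take_add_height_drop (l : List Bool) (j : ℕ) :
    height (l.take j) + height (l.drop j) = height l := by
  rw [← height_append, take_append_drop]

def flipTail (u : List Bool) (j : ℕ) : List Bool := u.take j ++ true :: revComp (u.drop j)

section FlipTail

variable {u : List Bool} {j : ℕ}

theorem take_flipTail (h : j ≤ u.length) : (flipTail u j).take j = u.take j :=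
  take_left' (length_take_of_le h)

theorem drop_flipTail (h : j ≤ u.length) : (flipTail u j).drop (j + 1) = revComp (u.drop j) := by
  rw [flipTail, append_cons]
  exact drop_left' (by simp [length_take_of_le h])

theorem length_flipTail (h : j ≤ u.length) : (flipTail u j).length = u.length + 1 := by
  simp [flipTail, length_take_of_le h]
  omega

theorem height_flipTail : height (flipTail u j) = 2 * height (u.take j) + 1 - height u := by
  have := height_take_add_height_drop u j
  rw [flipTail, append_cons, height_append, height_append, height_revComp]
  simp only [height_singleton, if_true]
  omega

theorem eq_of_flipTail_eq {u' : List Bool} (h : j ≤ u.length) (h' : j ≤ u'.length)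
    (huu' : flipTail u j = flipTail u' j) : u = u' := by
  rw [← take_append_drop j u, ← take_append_drop j u', ← take_flipTail h, ← take_flipTail h',
    ← revComp_revComp (u.drop j), ← revComp_revComp (u'.drop j), ← drop_flipTail h,
    ← drop_flipTail h', huu']

theorem staysAbove_revComp_drop (hu : StaysAbove 0 u) (hu0 : height u = 0) (j : ℕ) :
    StaysAbove 0 (revComp (u.drop j)) := by
  rw [← take_append_drop j u, staysAbove_append] at hu
  rw [staysAbove_revComp]
  have := height_take_add_height_drop u j
  exact hu.2.mono (by omega)

theorem staysAbove_flipTail (hu : StaysAbove 0 u) (hu0 : height u = 0) :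
    StaysAbove 0 (flipTail u j) := by
  have hrev := staysAbove_revComp_drop hu hu0 j
  rw [← take_append_drop j u, staysAbove_append] at hu
  have hnonneg := hu.1.le_height
  rw [flipTail, append_cons, staysAbove_append, staysAbove_append, staysAbove_singleton]
  refine ⟨⟨hu.1, by omega, by simp; omega⟩, hrev.mono ?_⟩
  simp only [height_append, height_singleton, if_true]
  omega

theorem height_take_lt_height_take_flipTail (hu : StaysAbove 0 u) (hu0 : height u = 0)
    (h : j ≤ u.length) {i : ℕ} (hi : j < i) :
    height (u.take j) < height ((flipTail u j).take i) := by
  have hrev := staysAbove_revComp_drop hu hu0 j (i - (j + 1))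
  rw [flipTail, append_cons, take_append,
    take_of_length_le (l := u.take j ++ [true]) (by simp [length_take_of_le h]; omega),
    height_append, height_append]
  simp only [height_singleton, if_true, length_append, length_take_of_le h, length_singleton]
  omega

end FlipTail

-- Split `w` at its last point of height at most `d`.
theorem exists_eq_append_true_cons {w : List Bool} {d : ℤ} (hd : 0 ≤ d) (hw : d < height w) :
    ∃ a r, w = a ++ true :: r ∧ height a = d ∧ StaysAbove 0 r := by
  classical
  set j := Nat.findGreatest (fun i => height (w.take i) ≤ d) w.length
  have hj_le : height (w.take j) ≤ d :=
    Nat.findGreatest_spec (P := fun i => height (w.take i) ≤ d) (Nat.zero_le _) (by simpa using hd)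
  have hj_gt : ∀ i, j < i → i ≤ w.length → d < height (w.take i) := fun i hi hiw =>
    lt_of_not_ge (Nat.findGreatest_is_greatest hi hiw)
  have hj_lt : j < w.length := by
    refine lt_of_le_of_ne (Nat.findGreatest_le _) fun h => ?_
    rw [h, take_length] at hj_le
    omega
  have hstep := hj_gt (j + 1) (by omega) hj_lt
  rw [← take_concat_get' w j hj_lt, height_append] at hstep
  have hwj : w[j] = true := by
    by_contra hwj
    simp [hwj] at hstep
    omega
  simp only [hwj, height_singleton, if_true] at hstep
  refine ⟨w.take j, w.drop (j + 1), ?_, by omega, ?_⟩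
  · rw [← hwj, ← drop_eq_getElem_cons hj_lt, take_append_drop]
  · rw [staysAbove_iff_forall_le_length]
    intro t ht
    have := hj_gt (j + 1 + t) (by omega) (by simp at ht; omega)
    rw [take_add, ← take_concat_get' w j hj_lt, hwj, height_append, height_append] at this
    simp only [height_singleton, if_true] at this
    omega

noncomputable def visitPairs (k d : ℕ) : Finset (List Bool × ℕ) :=
  (ballotWords (2 * k) k ×ˢ Finset.range (2 * k + 1)).filter fun z => height (z.1.take z.2) = d

theorem mem_visitPairs {k d : ℕ} {u : List Bool} {j : ℕ} :
    (u, j) ∈ visitPairs k d ↔ u ∈ ballotWords (2 * k) k ∧ j ≤ 2 * k ∧ height (u.take j) = d := by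
  simp only [visitPairs, Finset.mem_filter, Finset.mem_product, Finset.mem_range, Nat.lt_succ_iff,
    and_assoc]

section VisitPairs

variable {k d : ℕ}

theorem mapsTo_flipTail_visitPairs :
    Set.MapsTo (Function.uncurry flipTail) (visitPairs k d)
      (ballotWords (2 * k + 1) (k + d + 1)) := by
  rintro ⟨u, j⟩ hz
  obtain ⟨hu, hj, hd⟩ := mem_visitPairs.1 hz
  change flipTail u j ∈ ballotWords (2 * k + 1) (k + d + 1)
  obtain ⟨hlen, -, hball⟩ := mem_ballotWords.1 hu
  have hu0 := height_of_mem_ballotWords hu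
  have hlen' : (flipTail u j).length = 2 * k + 1 := by rw [length_flipTail (by omega), hlen]
  have hcount := two_mul_count_true (flipTail u j)
  rw [hlen', height_flipTail, hd, hu0] at hcount
  exact mem_ballotWords.2 ⟨hlen', by omega, staysAbove_flipTail hball (by omega)⟩

theorem injOn_flipTail_visitPairs : Set.InjOn (Function.uncurry flipTail) (visitPairs k d) := by
  rintro ⟨u, j⟩ hz ⟨u', j'⟩ hz' h
  obtain ⟨hu, hj, hd⟩ := mem_visitPairs.1 hz
  obtain ⟨hu', hj', hd'⟩ := mem_visitPairs.1 hz'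
  obtain ⟨hlen, -, hball⟩ := mem_ballotWords.1 hu
  obtain ⟨hlen', -, hball'⟩ := mem_ballotWords.1 hu'
  have hu0 := height_of_mem_ballotWords hu
  have hu0' := height_of_mem_ballotWords hu'
  simp only [Function.uncurry_apply_pair] at h
  obtain rfl : j = j' := by
    rcases lt_trichotomy j j' with hlt | heq | hgt
    · have := height_take_lt_height_take_flipTail hball (by omega) (by omega) hlt
      rw [h, take_flipTail (by omega)] at this
      omega
    · exact heq
    · have := height_take_lt_height_take_flipTail hball' (by omega) (by omega) hgt
      rw [← h, take_flipTail (by omega)] at this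
      omega
  rw [eq_of_flipTail_eq (by omega) (by omega) h]

theorem surjOn_flipTail_visitPairs :
    Set.SurjOn (Function.uncurry flipTail) (visitPairs k d)
      (ballotWords (2 * k + 1) (k + d + 1)) := by
  intro w hw
  obtain ⟨hlen, -, hball⟩ := mem_ballotWords.1 hw
  have hw0 := height_of_mem_ballotWords hw
  obtain ⟨a, r, rfl, ha, hr⟩ :=
    exists_eq_append_true_cons (w := w) (d := d) (by positivity) (by omega)
  have hr0 : height r = d := by
    rw [height_append, ← singleton_append, height_append] at hw0
    simp only [height_singleton, if_true] at hw0
    omega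
  have hu : a ++ revComp r ∈ ballotWords (2 * k) k := by
    have hcount := two_mul_count_true (a ++ revComp r)
    rw [height_append, height_revComp, length_append, length_revComp] at hcount
    simp only [length_append, length_cons] at hlen
    refine mem_ballotWords.2 ⟨by simp; omega, by omega, ?_⟩
    rw [staysAbove_append, staysAbove_revComp]
    exact ⟨(staysAbove_append.1 hball).1, by rwa [ha, hr0, sub_add_cancel]⟩
  refine ⟨(a ++ revComp r, a.length), mem_visitPairs.2 ⟨hu, ?_, by rwa [take_left' rfl]⟩, ?_⟩
  · simp only [length_append, length_cons] at hlen
    omega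
  · simp [flipTail, take_left', drop_left']

theorem card_visitPairs : (visitPairs k d).card = ballotNumber (2 * k + 1) (k + d + 1) := by
  rw [← card_ballotWords]
  exact card_nbij _ mapsTo_flipTail_visitPairs injOn_flipTail_visitPairs surjOn_flipTail_visitPairs

end VisitPairs

def numVisits (d : ℤ) (u : List Bool) : ℕ :=
  #{j ∈ Finset.range (u.length + 1) | height (u.take j) = d}

theorem sum_numVisits_ballotWords (k d : ℕ) :
    ∑ u ∈ ballotWords (2 * k) k, numVisits d u = ballotNumber (2 * k + 1) (k + d + 1) := by
  rw [← card_visitPairs, visitPairs, card_filter, sum_product]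
  refine sum_congr rfl fun u hu => ?_
  rw [numVisits, (mem_ballotWords.1 hu).1, card_filter]

theorem height_nonneg_iff {l : List Bool} : 0 ≤ height l ↔ l.count false ≤ l.count true := by
  simp only [height]
  omega

theorem le_of_mul_le_mul_succ {a b k : ℕ} (hab : a + b ≤ 2 * k) (h : a * k ≤ b * (k + 1)) :
    a ≤ b := by
  by_contra! hba
  nlinarith

theorem mem_image_ofFn_dyckPathsToNextToDiag {k : ℕ} {w : List Bool} :
    w ∈ (DyckPathsToNextToDiag k).image ofFn ↔ w.length = 2 * k + 1 ∧ w.count true = k ∧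
      ∀ j, (w.take j).count false * k ≤ (w.take j).count true * (k + 1) := by
  simp only [DyckPathsToNextToDiag, Finset.mem_image, Finset.mem_filter, Finset.mem_univ, true_and,
    ge_iff_le]
  refine ⟨fun ⟨f, hf, hfw⟩ => hfw ▸ ⟨length_ofFn, hf⟩, fun ⟨hl, h⟩ => ?_⟩
  obtain ⟨f, rfl⟩ := exists_ofFn_eq hl
  exact ⟨f, h, rfl⟩

theorem image_ofFn_dyckPathsToNextToDiag (k : ℕ) :
    (DyckPathsToNextToDiag k).image ofFn = (ballotWords (2 * k) k).image (· ++ [false]) := by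
  ext w
  rw [mem_image_ofFn_dyckPathsToNextToDiag, Finset.mem_image]
  constructor
  · rintro ⟨hlen, hcount, hslope⟩
    obtain ⟨u, x, rfl⟩ : ∃ u x, w = u ++ [x] := by
      rcases eq_nil_or_concat w with rfl | ⟨u, x, rfl⟩
      · simp at hlen
      · exact ⟨u, x, concat_eq_append⟩
    have hlen' : u.length = 2 * k := by simpa using hlen
    have hball : StaysAbove 0 u := staysAbove_iff_forall_le_length.2 fun j hj => by
      have := hslope j
      rw [take_append_of_le_length hj] at this
      refine height_nonneg_iff.2 (le_of_mul_le_mul_succ ?_ this)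
      have := count_false_add_count_true (u.take j)
      simp only [length_take] at this
      omega
    have hcount_u := two_mul_count_true u
    have := hball.le_height
    cases x
    · exact ⟨u, mem_ballotWords.2 ⟨hlen', by simp at hcount; omega, hball⟩, rfl⟩
    · simp at hcount
      omega
  · rintro ⟨u, hu, rfl⟩
    obtain ⟨hlen, hcount, hball⟩ := mem_ballotWords.1 hu
    refine ⟨by simp [hlen], by simp [hcount], fun j => ?_⟩
    rcases le_or_gt j (2 * k) with hj | hj
    · rw [take_append_of_le_length (by omega)]
      exact Nat.mul_le_mul (height_nonneg_iff.1 (hball j)) (Nat.le_succ k)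
    · have hfalse : u.count false = k := by
        have := count_false_add_count_true u
        omega
      rw [take_of_length_le (by simp; omega)]
      simp [hfalse, hcount, Nat.mul_comm]

theorem numVisits_append_of_ne {d : ℤ} {u : List Bool} {b : Bool} (h : height (u ++ [b]) ≠ d) :
    numVisits d (u ++ [b]) = numVisits d u := by
  rw [numVisits, numVisits, length_append, length_singleton, Finset.range_add_one,
    Finset.filter_insert, if_neg (by rwa [take_of_length_le (by simp)])]
  refine congrArg _ (Finset.filter_congr fun j hj => ?_)
  rw [take_append_of_le_length (by simp at hj; omega)]

theorem card_dyckPathsToNextToDiag (k : ℕ) :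
    (DyckPathsToNextToDiag k).card = ballotNumber (2 * k) k := by
  rw [← Finset.card_image_of_injective _ ofFn_injective, image_ofFn_dyckPathsToNextToDiag,
    Finset.card_image_of_injective _ (append_left_injective _), card_ballotWords]

theorem sum_visitsToLine (k d : ℕ) :
    ∑ p ∈ DyckPathsToNextToDiag k, visitsToLine k d p = ballotNumber (2 * k + 1) (k + d + 1) := by
  have hvisits (p : Fin (2 * k + 1) → Bool) : visitsToLine k d p = numVisits d (ofFn p) := by
    rw [numVisits, length_ofFn]
    rfl
  rw [Finset.sum_congr rfl fun p _ => hvisits p, ← Finset.sum_image ofFn_injective.injOn,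
    image_ofFn_dyckPathsToNextToDiag, Finset.sum_image (append_left_injective _).injOn,
    ← sum_numVisits_ballotWords]
  refine Finset.sum_congr rfl fun u hu => numVisits_append_of_ne ?_
  rw [height_append, height_of_mem_ballotWords hu]
  simp

open Filter Topology

theorem tendsto_choose_div_choose (d : ℕ) :
    Tendsto (fun k : ℕ => ((2 * k + 1).choose (k + 1 + d) : ℝ) / (2 * k + 1).choose (k + 1))
      atTop (𝓝 1) := by
  induction d with
  | zero =>
    refine tendsto_const_nhds.congr fun k => ?_
    rw [add_zero, div_self (by exact_mod_cast (Nat.choose_pos (by omega)).ne')]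
  | succ d ih =>
    have hstep : Tendsto (fun k : ℕ => ((k : ℝ) - d) / (k + d + 2)) atTop (𝓝 1) := by
      convert tendsto_add_mul_div_add_mul_atTop_nhds (-(d : ℝ)) (d + 2) 1 one_ne_zero using 2 <;>
        ring
    have hprod := ih.mul hstep
    rw [one_mul] at hprod
    refine hprod.congr' ?_
    filter_upwards [eventually_ge_atTop d] with k hk
    have hpos : (0 : ℝ) < (2 * k + 1).choose (k + 1) := by exact_mod_cast Nat.choose_pos (by omega)
    have hrec : ((2 * k + 1).choose (k + 1 + (d + 1)) : ℝ) * (k + d + 2) =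
        (2 * k + 1).choose (k + 1 + d) * ((k : ℝ) - d) := by
      have h := Nat.choose_succ_right_eq (2 * k + 1) (k + 1 + d)
      rw [show 2 * k + 1 - (k + 1 + d) = k - d by omega] at h
      have h' := congrArg (Nat.cast : ℕ → ℝ) h
      push_cast [Nat.cast_sub hk] at h'
      rw [show k + 1 + (d + 1) = k + 1 + d + 1 by ring]
      linear_combination h'
    field_simp
    linear_combination -hrec

theorem ballotNumber_div_ballotNumber {k d : ℕ} :
    (ballotNumber (2 * k + 1) (k + d + 1) : ℝ) / ballotNumber (2 * k) k =
      (2 * d + 2) * ((2 * k + 1) / (k + d + 2)) *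
        ((2 * k + 1).choose (k + 1 + d) / (2 * k + 1).choose (k + 1)) := by
  have h₁ := ballotNumber_mul_succ (2 * k + 1) (k + d + 1)
  have h₂ := ballotNumber_mul_succ (2 * k) k
  have h₃ := Nat.add_one_mul_choose_eq (2 * k) k
  rw [show 2 * (k + d + 1) + 1 - (2 * k + 1) = 2 * d + 2 by omega] at h₁
  rw [show 2 * k + 1 - 2 * k = 1 by omega, mul_one] at h₂
  have hC : (0 : ℝ) < (2 * k + 1).choose (k + 1) := by exact_mod_cast Nat.choose_pos (by omega)
  have hB : (0 : ℝ) < ballotNumber (2 * k) k := by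
    have : 0 < ballotNumber (2 * k) k * (k + 1) := h₂ ▸ Nat.choose_pos (by omega)
    exact_mod_cast Nat.pos_of_mul_pos_right this
  have h₁' : (ballotNumber (2 * k + 1) (k + d + 1) : ℝ) * (k + d + 2) =
      (2 * k + 1).choose (k + 1 + d) * (2 * d + 2) := by
    rw [show k + 1 + d = k + d + 1 by ring]
    exact_mod_cast h₁
  have h₂' : (ballotNumber (2 * k) k : ℝ) * (k + 1) = (2 * k).choose k := by exact_mod_cast h₂
  have h₃' : (2 * k + 1 : ℝ) * (2 * k).choose k = (2 * k + 1).choose (k + 1) * (k + 1) := by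
    exact_mod_cast h₃
  have h₄ : (ballotNumber (2 * k) k : ℝ) * (2 * k + 1) = (2 * k + 1).choose (k + 1) := by
    refine mul_right_cancel₀ (b := (k : ℝ) + 1) (by positivity) ?_
    linear_combination (2 * (k : ℝ) + 1) * h₂' + h₃'
  field_simp
  linear_combination ((2 * k + 1).choose (k + 1) : ℝ) * h₁' -
    (2 * (d : ℝ) + 2) * (2 * k + 1).choose (k + 1 + d) * h₄

theorem tendsto_ballotNumber_div_ballotNumber (d : ℕ) :
    Tendsto (fun k : ℕ => (ballotNumber (2 * k + 1) (k + d + 1) : ℝ) / ballotNumber (2 * k) k)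
      atTop (𝓝 (4 * d + 4)) := by
  have hlin : Tendsto (fun k : ℕ => (2 * (k : ℝ) + 1) / (k + d + 2)) atTop (𝓝 2) := by
    convert tendsto_add_mul_div_add_mul_atTop_nhds (1 : ℝ) (d + 2) 2 one_ne_zero using 2 <;>
      ring
  have hlim :=
    ((tendsto_const_nhds (x := 2 * (d : ℝ) + 2)).mul hlin).mul (tendsto_choose_div_choose d)
  rw [show (2 * (d : ℝ) + 2) * 2 * 1 = 4 * d + 4 by ring] at hlim
  exact hlim.congr fun k => ballotNumber_div_ballotNumber.symm

end BallotWord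

/-- Proposition 7.1 of the paper: for a uniformly random rational Dyck path
from `(0,0)` to `(k+1, k)`, the expected number of visits to the line
`b − a = d` tends to `4d + 4` as `k → ∞`. -/
theorem expected_visits_tendsto (d : ℕ) :
    Filter.Tendsto
      (fun k : ℕ =>
        (∑ p ∈ DyckPathsToNextToDiag k, (visitsToLine k d p : ℝ)) /
          ((DyckPathsToNextToDiag k).card : ℝ))
      Filter.atTop (nhds (4 * (d : ℝ) + 4)) := by
  refine (BallotWord.tendsto_ballotNumber_div_ballotNumber d).congr fun k => ?_
  rw [← Nat.cast_sum, BallotWord.sum_visitsToLine, BallotWord.card_dyckPathsToNextToDiag]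
end
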